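/- arXiv:1307.3109 — 5 statements merged into one kernel-verified Lean document; each statement's English description precedes it below -/
import Mathlib

section
/- If A is an n×n complex matrix and there exists a positive integer k such that A^k is entrywise nonnegative, then there exists an integer h with 1 ≤ h ≤ k such that some eigenvalue λ of A of maximum modulus satisfies λ = ρ(A)·exp(2πi·h/k), where ρ(A) is the spectral radius of A. -/
open ComplexOrder

open Matrix Complex

noncomputable def specRad {n : ℕ} (A : Matrix (Fin n) (Fin n) ℂ) : ℝ :=
  sSup ((fun z : ℂ => ‖z‖) '' spectrum ℂ A)

/-!
Every power of the entrywise nonnegative matrix `B = A ^ k` is entrywise nonnegative, so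
`tr (B ^ m) = ∑ d_μ μ ^ m ≥ 0` for all `m`, with `μ` running over the spectrum of `B` and
`d_μ > 0` the algebraic multiplicities. Let `r = ρ(A) ^ k` and `|μ₀| = r`. If `r` were not an
eigenvalue of `B`, the Cesàro means of `r ^ -m tr (B ^ m)` would tend to `0`, since each
`(μ / r) ^ m` with `μ / r ≠ 1` averages to `0`. But the Cesàro means of
`(conj μ₀ / r²) ^ m tr (B ^ m)` are dominated by them in modulus, because the traces are
nonnegative, and they tend to `d_{μ₀} > 0`, the only term with ratio `1`. So `r` is an
eigenvalue of `B`, i.e. `λ ^ k = ρ(A) ^ k` for an eigenvalue `λ` of `A`, and `λ / ρ(A)` is a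
`k`-th root of unity.
-/

open Filter Finset Topology ComplexConjugate Module

section Cesaro

variable {𝕜 : Type*} [RCLike 𝕜]

lemma norm_geom_sum_le {w : 𝕜} (hw : ‖w‖ ≤ 1) (h1 : w ≠ 1) (M : ℕ) :
    ‖∑ m ∈ range M, w ^ m‖ ≤ 2 / ‖w - 1‖ := by
  rw [geom_sum_eq h1, norm_div]
  gcongr
  calc ‖w ^ M - 1‖ ≤ ‖w‖ ^ M + 1 := by simpa [norm_pow] using norm_sub_le (w ^ M) 1
    _ ≤ 2 := by linarith [pow_le_one₀ (n := M) (norm_nonneg w) hw]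

lemma tendsto_cesaro_pow {w : 𝕜} (hw : ‖w‖ ≤ 1) :
    Tendsto (fun M : ℕ => (M : 𝕜)⁻¹ * ∑ m ∈ range M, w ^ m) atTop
      (𝓝 (if w = 1 then 1 else 0)) := by
  split_ifs with h1
  · refine tendsto_const_nhds.congr' ?_
    filter_upwards [eventually_ne_atTop 0] with M hM
    simp [h1, hM]
  · refine squeeze_zero_norm (a := fun M : ℕ => 2 / ‖w - 1‖ * (M : ℝ)⁻¹) (fun M => ?_) ?_
    · rw [norm_mul, norm_inv, RCLike.norm_natCast, mul_comm]
      gcongr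
      exact norm_geom_sum_le hw h1 M
    · simpa using (tendsto_inv_atTop_nhds_zero_nat (𝕜 := ℝ)).const_mul (2 / ‖w - 1‖)

lemma tendsto_cesaro_sum_mul_pow {ι : Type*} (S : Finset ι) (c w : ι → 𝕜)
    (hw : ∀ i ∈ S, ‖w i‖ ≤ 1) :
    Tendsto (fun M : ℕ => (M : 𝕜)⁻¹ * ∑ m ∈ range M, ∑ i ∈ S, c i * w i ^ m) atTop
      (𝓝 (∑ i ∈ S with w i = 1, c i)) := by
  have hswap : ∀ M : ℕ, (M : 𝕜)⁻¹ * ∑ m ∈ range M, ∑ i ∈ S, c i * w i ^ m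
      = ∑ i ∈ S, c i * ((M : 𝕜)⁻¹ * ∑ m ∈ range M, w i ^ m) := by
    intro M
    rw [Finset.sum_comm, Finset.mul_sum]
    refine Finset.sum_congr rfl fun i _ => ?_
    rw [← Finset.mul_sum]
    ring
  have hlim : (∑ i ∈ S with w i = 1, c i) = ∑ i ∈ S, c i * (if w i = 1 then 1 else 0) := by
    simp [Finset.sum_filter]
  rw [funext hswap, hlim]
  exact tendsto_finsetSum S fun i hi => (tendsto_cesaro_pow (hw i hi)).const_mul (c i)

end Cesaro

lemma norm_cesaro_le_re {x y : ℕ → ℂ} (hxy : ∀ m, ‖x m‖ ≤ (y m).re) (M : ℕ) :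
    ‖(M : ℂ)⁻¹ * ∑ m ∈ range M, x m‖ ≤ ((M : ℂ)⁻¹ * ∑ m ∈ range M, y m).re := by
  rw [norm_mul, norm_inv, norm_natCast, ← ofReal_natCast, ← ofReal_inv, re_ofReal_mul, re_sum]
  gcongr
  exact (norm_sum_le _ _).trans (Finset.sum_le_sum fun m _ => hxy m)

lemma coeff_eq_zero_of_sum_mul_pow_nonneg {S : Finset ℂ} {c : ℂ → ℂ} {r : ℝ}
    (hle : ∀ μ ∈ S, ‖μ‖ ≤ r) (hr : (r : ℂ) ∉ S) (hnonneg : ∀ m : ℕ, 0 ≤ ∑ μ ∈ S, c μ * μ ^ m)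
    {μ₀ : ℂ} (hμ₀ : μ₀ ∈ S) (hμ₀r : ‖μ₀‖ = r) : c μ₀ = 0 := by
  have hr0 : 0 < r := by
    rw [← hμ₀r, norm_pos_iff]
    rintro rfl
    exact hr (by simpa [← hμ₀r] using hμ₀)
  have hrC : (r : ℂ) ≠ 0 := ofReal_ne_zero.2 hr0.ne'
  set a : ℂ := conj μ₀ / (r : ℂ) ^ 2 with ha
  have ha_norm : ‖a‖ = r⁻¹ := by
    rw [ha, norm_div, norm_pow, norm_conj, norm_real, Real.norm_of_nonneg hr0.le, hμ₀r]
    field_simp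
  have ha_μ₀ : a * μ₀ = 1 := by
    rw [ha, div_mul_eq_mul_div, mul_comm, mul_conj, normSq_eq_norm_sq, hμ₀r]
    push_cast
    field_simp
  have hmean_sum := tendsto_cesaro_sum_mul_pow S c (fun μ => μ / r) fun μ hμ => by
    rw [norm_div, norm_real, Real.norm_of_nonneg hr0.le]
    exact div_le_one_of_le₀ (hle μ hμ) hr0.le
  have hmean_coeff := tendsto_cesaro_sum_mul_pow S c (fun μ => a * μ) fun μ hμ => by
    rw [norm_mul, ha_norm]
    exact inv_mul_le_one_of_le₀ (hle μ hμ) hr0.le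
  have hfilter_sum : {μ ∈ S | μ / (r : ℂ) = 1} = ∅ :=
    Finset.filter_eq_empty_iff.2 fun μ hμ h => hr (by rwa [(div_eq_one_iff_eq hrC).1 h] at hμ)
  have hfilter_coeff : {μ ∈ S | a * μ = 1} = {μ₀} := by
    ext μ
    simp only [Finset.mem_filter, Finset.mem_singleton]
    refine ⟨fun h => mul_left_cancel₀ (left_ne_zero_of_mul_eq_one ha_μ₀) (h.2.trans ha_μ₀.symm),
      fun h => h ▸ ⟨hμ₀, ha_μ₀⟩⟩
  rw [hfilter_sum, Finset.sum_empty] at hmean_sum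
  rw [hfilter_coeff, Finset.sum_singleton] at hmean_coeff
  have hpointwise : ∀ m : ℕ,
      ‖∑ μ ∈ S, c μ * (a * μ) ^ m‖ ≤ (∑ μ ∈ S, c μ * (μ / r) ^ m).re := by
    intro m
    have hscale : ∀ b : ℂ, ∑ μ ∈ S, c μ * (b * μ) ^ m = b ^ m * ∑ μ ∈ S, c μ * μ ^ m := by
      intro b
      rw [Finset.mul_sum]
      exact Finset.sum_congr rfl fun μ _ => by ring
    simp_rw [div_eq_inv_mul (b := (r : ℂ)), hscale, ← ofReal_inv, ← ofReal_pow, re_ofReal_mul,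
      norm_mul, norm_pow, ha_norm, ← Complex.re_eq_norm.2 (hnonneg m), inv_pow]
    rfl
  have hlim := le_of_tendsto_of_tendsto' (continuous_norm.tendsto _ |>.comp hmean_coeff)
    (continuous_re.tendsto _ |>.comp hmean_sum) (norm_cesaro_le_re hpointwise)
  simpa using hlim

namespace Module.End

variable {K V : Type*} [Field K] [AddCommGroup V] [Module K V] [FiniteDimensional K V]

lemma trace_pow_of_isNilpotent_sub_algebraMap {g : End K V} {μ : K}
    (hg : IsNilpotent (g - algebraMap K (End K V) μ)) (m : ℕ) :
    LinearMap.trace K V (g ^ m) = finrank K V * μ ^ m := by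
  set a := algebraMap K (End K V) μ
  have hga : Commute g a := (Algebra.commutes μ g).symm
  have hnil : IsNilpotent (g ^ m - a ^ m) := by
    rw [← hga.geom_sum₂_mul]
    refine Commute.isNilpotent_mul_left ?_ hg
    refine Commute.sum_left _ _ _ fun i _ => ?_
    exact (((Commute.refl g).pow_left i).mul_left (hga.symm.pow_left _)).sub_right
      ((hga.pow_left i).mul_left ((Commute.refl a).pow_left _))
  rw [← sub_add_cancel (g ^ m) (a ^ m), map_add,
    (LinearMap.isNilpotent_trace_of_isNilpotent hnil).eq_zero, zero_add, ← map_pow,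
    Algebra.algebraMap_eq_smul_one, map_smul, LinearMap.trace_one, smul_eq_mul, mul_comm]

lemma trace_pow_eq_sum_finrank_maxGenEigenspace [IsAlgClosed K] (f : End K V)
    (hfin : {μ | f.maxGenEigenspace μ ≠ ⊥}.Finite) (m : ℕ) :
    LinearMap.trace K V (f ^ m)
      = ∑ μ ∈ hfin.toFinset, (finrank K (f.maxGenEigenspace μ) : K) * μ ^ m := by
  classical
  have hds := DirectSum.isInternal_submodule_of_iSupIndep_of_iSup_eq_top
    f.independent_maxGenEigenspace f.iSup_maxGenEigenspace_eq_top
  have hmapsto : ∀ μ : K, Set.MapsTo (f ^ m) (f.maxGenEigenspace μ) (f.maxGenEigenspace μ) :=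
    fun μ => mapsTo_maxGenEigenspace_of_comm ((Commute.refl f).pow_right m) μ
  rw [LinearMap.trace_eq_sum_trace_restrict' hds hfin hmapsto]
  refine Finset.sum_congr rfl fun μ _ => ?_
  rw [← pow_restrict m (mapsTo_maxGenEigenspace_of_comm rfl μ)]
  refine trace_pow_of_isNilpotent_sub_algebraMap ?_ m
  convert f.isNilpotent_restrict_maxGenEigenspace_sub_algebraMap μ using 1
  ext
  rfl

lemma maxGenEigenspace_ne_bot_iff_mem_spectrum {f : End K V} {μ : K} :
    f.maxGenEigenspace μ ≠ ⊥ ↔ μ ∈ spectrum K f := by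
  rw [← hasUnifEigenvalue_iff_mem_spectrum,
    ← hasUnifEigenvalue_iff_hasUnifEigenvalue_one WithTop.top_pos]
  rfl

end Module.End

theorem Matrix.ofReal_mem_spectrum_of_trace_pow_nonneg {ι : Type*} [Fintype ι] [DecidableEq ι]
    (B : Matrix ι ι ℂ) (htrace : ∀ m : ℕ, 0 ≤ (B ^ m).trace) {r : ℝ}
    (hle : ∀ μ ∈ spectrum ℂ B, ‖μ‖ ≤ r) {μ₀ : ℂ} (hμ₀ : μ₀ ∈ spectrum ℂ B) (hμ₀r : ‖μ₀‖ = r) :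
    (r : ℂ) ∈ spectrum ℂ B := by
  set f : End ℂ (ι → ℂ) := toLin' B
  have hfin : {μ | f.maxGenEigenspace μ ≠ ⊥}.Finite :=
    WellFoundedGT.finite_ne_bot_of_iSupIndep f.independent_maxGenEigenspace
  have hmem : ∀ μ, μ ∈ hfin.toFinset ↔ μ ∈ spectrum ℂ B := fun μ => by
    rw [Set.Finite.mem_toFinset, Set.mem_ofPred_eq, End.maxGenEigenspace_ne_bot_iff_mem_spectrum,
      spectrum_toLin']
  by_contra hr
  have hcoeff := coeff_eq_zero_of_sum_mul_pow_nonneg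
    (c := fun μ => (finrank ℂ (f.maxGenEigenspace μ) : ℂ))
    (fun μ hμ => hle μ ((hmem μ).1 hμ)) (mt (hmem _).1 hr)
    (fun m => by
      rw [← End.trace_pow_eq_sum_finrank_maxGenEigenspace, ← toLin'_pow, trace_toLin'_eq]
      exact htrace m)
    ((hmem μ₀).2 hμ₀) hμ₀r
  exact ((hmem μ₀).2 hμ₀ |> (Set.Finite.mem_toFinset hfin).1)
    (Submodule.finrank_eq_zero.1 (by exact_mod_cast hcoeff))

lemma norm_le_specRad {n : ℕ} {A : Matrix (Fin n) (Fin n) ℂ} {μ : ℂ} (hμ : μ ∈ spectrum ℂ A) :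
    ‖μ‖ ≤ specRad A :=
  le_csSup (A.finite_spectrum.image _).bddAbove ⟨μ, hμ, rfl⟩

lemma exists_norm_eq_specRad {n : ℕ} (hn : 0 < n) (A : Matrix (Fin n) (Fin n) ℂ) :
    ∃ μ ∈ spectrum ℂ A, ‖μ‖ = specRad A :=
  have : Nonempty (Fin n) := ⟨⟨0, hn⟩⟩
  ((spectrum.nonempty_of_isAlgClosed_of_finiteDimensional ℂ A).image _).csSup_mem
    (A.finite_spectrum.image _)

lemma exists_eq_ofReal_mul_of_pow_eq {lam : ℂ} {ρ : ℝ} {k : ℕ} (hρ : 0 ≤ ρ) (hk : k ≠ 0)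
    (h : lam ^ k = (ρ : ℂ) ^ k) : ∃ ζ : ℂ, ζ ^ k = 1 ∧ lam = ρ * ζ := by
  rcases hρ.eq_or_lt with rfl | hρ
  · exact ⟨1, one_pow k, by simpa [hk] using h⟩
  · have hρC : (ρ : ℂ) ≠ 0 := ofReal_ne_zero.2 hρ.ne'
    exact ⟨lam / ρ, by rw [div_pow, h, div_self (pow_ne_zero k hρC)], by field_simp⟩

lemma exists_eq_exp_of_pow_eq_one {ζ : ℂ} {k : ℕ} (hk : k ≠ 0) (hζ : ζ ^ k = 1) :
    ∃ h : ℕ, 1 ≤ h ∧ h ≤ k ∧ ζ = Complex.exp (2 * Real.pi * Complex.I * h / k) := by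
  have : NeZero k := ⟨hk⟩
  obtain ⟨i, hik, rfl⟩ := (isPrimitiveRoot_exp k hk).eq_pow_of_pow_eq_one hζ
  have hpow : ∀ j : ℕ, exp (2 * Real.pi * I / k) ^ j = exp (2 * Real.pi * I * j / k) := fun j => by
    rw [← exp_nat_mul]
    ring_nf
  rcases i.eq_zero_or_pos with rfl | hi
  · refine ⟨k, Nat.one_le_iff_ne_zero.2 hk, le_rfl, ?_⟩
    rw [pow_zero, mul_div_assoc, div_self (Nat.cast_ne_zero.2 hk), mul_one, exp_two_pi_mul_I]
  · exact ⟨i, hi, hik.le, hpow i⟩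

theorem stmt_0 {n : ℕ} (hn : 0 < n) (A : Matrix (Fin n) (Fin n) ℂ) (k : ℕ) (hk : 1 ≤ k)
    (hnonneg : ∀ i j, 0 ≤ (A ^ k) i j) :
    ∃ h : ℕ, 1 ≤ h ∧ h ≤ k ∧ ∃ lam ∈ spectrum ℂ A,
      ‖lam‖ = specRad A ∧
      lam = (specRad A : ℂ) * Complex.exp (2 * Real.pi * Complex.I * h / k) := by
  have hk0 : k ≠ 0 := Nat.one_le_iff_ne_zero.1 hk
  obtain ⟨μ₀, hμ₀, hμ₀ρ⟩ := exists_norm_eq_specRad hn A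
  have hρ0 : 0 ≤ specRad A := hμ₀ρ ▸ norm_nonneg μ₀
  have hspec : spectrum ℂ (A ^ k) = (· ^ k) '' spectrum ℂ A := spectrum.map_pow_of_pos A hk
  have hρk : ((specRad A ^ k : ℝ) : ℂ) ∈ spectrum ℂ (A ^ k) := by
    refine (A ^ k).ofReal_mem_spectrum_of_trace_pow_nonneg (μ₀ := μ₀ ^ k)
      (fun m => Finset.sum_nonneg fun i _ => pow_apply_nonneg hnonneg m i i) ?_
      (hspec ▸ ⟨μ₀, hμ₀, rfl⟩) (by rw [norm_pow, hμ₀ρ])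
    rw [hspec]
    rintro _ ⟨μ, hμ, rfl⟩
    exact norm_pow μ k ▸ pow_le_pow_left₀ (norm_nonneg μ) (norm_le_specRad hμ) k
  rw [hspec] at hρk
  obtain ⟨lam, hlam, hlamk⟩ := hρk
  obtain ⟨ζ, hζ, rfl⟩ := exists_eq_ofReal_mul_of_pow_eq hρ0 hk0 (by simpa using hlamk)
  have hρ : ‖(specRad A : ℂ) * ζ‖ = specRad A := by
    rw [norm_mul, norm_eq_one_of_pow_eq_one hζ hk0, mul_one, norm_real, Real.norm_of_nonneg hρ0]
  obtain ⟨h, h1, hhk, rfl⟩ := exists_eq_exp_of_pow_eq_one hk0 hζ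
  exact ⟨h, h1, hhk, _, hlam, hρ, rfl⟩
end

section
/- Let A be an n×n nonnegative matrix. Then A is irreducible if and only if there exists a strictly increasing sequence of positive integers (a_m) such that A^{a_m} is irreducible for every m. -/
open Matrix

def MatIrredR {n : ℕ} (A : Matrix (Fin n) (Fin n) ℝ) : Prop :=
  ∀ S : Set (Fin n), S.Nonempty → S ≠ Set.univ → ∃ i ∈ S, ∃ j ∉ S, A i j ≠ 0

namespace Stmt5Aux

variable {n : ℕ} (A : Matrix (Fin n) (Fin n) ℝ)

lemma pow_entry_nonneg (hA : ∀ i j, 0 ≤ A i j) : ∀ k i j, 0 ≤ (A ^ k) i j := by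
  intro k
  induction k with
  | zero =>
    intro i j
    rw [pow_zero]
    by_cases h : i = j <;> simp [Matrix.one_apply, h]
  | succ k ih =>
    intro i j
    rw [pow_succ, Matrix.mul_apply]
    exact Finset.sum_nonneg fun l _ => mul_nonneg (ih i l) (hA l j)

lemma pow_mul_ne (hA : ∀ i j, 0 ≤ A i j) {p q : ℕ} {i l j : Fin n}
    (h1 : (A ^ p) i l ≠ 0) (h2 : (A ^ q) l j ≠ 0) : (A ^ (p + q)) i j ≠ 0 := by
  have key : 0 < (A ^ (p + q)) i j := by
    rw [pow_add, Matrix.mul_apply]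
    apply Finset.sum_pos'
    · intro x _
      exact mul_nonneg (pow_entry_nonneg A hA p i x) (pow_entry_nonneg A hA q x j)
    · exact ⟨l, Finset.mem_univ l,
        mul_pos (lt_of_le_of_ne (pow_entry_nonneg A hA p i l) (Ne.symm h1))
          (lt_of_le_of_ne (pow_entry_nonneg A hA q l j) (Ne.symm h2))⟩
  exact key.ne'

lemma pow_diag_ne (hA : ∀ i j, 0 ≤ A i j) {c : ℕ} {i : Fin n}
    (h : (A ^ c) i i ≠ 0) : ∀ t, (A ^ (c * t)) i i ≠ 0 := by
  intro t
  induction t with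
  | zero => simp [Matrix.one_apply]
  | succ t ih =>
    have : c * (t + 1) = c * t + c := by ring
    rw [this]
    exact pow_mul_ne A hA ih h

lemma reach (hA : ∀ i j, 0 ≤ A i j) (hirr : MatIrredR A) (j v : Fin n) :
    ∃ s < n, (A ^ s) j v ≠ 0 := by
  set F : ℕ → Finset (Fin n) :=
    fun t => Finset.univ.filter (fun w => ∃ s ≤ t, (A ^ s) j w ≠ 0) with hF
  have hjF : ∀ t, j ∈ F t := by
    intro t
    simp only [hF, Finset.mem_filter, Finset.mem_univ, true_and]
    exact ⟨0, Nat.zero_le t, by simp [Matrix.one_apply]⟩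
  have hmono : ∀ t, F t ⊆ F (t + 1) := by
    intro t w hw
    simp only [hF, Finset.mem_filter, Finset.mem_univ, true_and] at hw ⊢
    obtain ⟨s, hs, h⟩ := hw
    exact ⟨s, hs.trans (Nat.le_succ t), h⟩
  have main : ∀ t : ℕ, F t = Finset.univ ∨ t + 1 ≤ (F t).card := by
    intro t
    induction t with
    | zero => exact Or.inr (Finset.card_pos.mpr ⟨j, hjF 0⟩)
    | succ t ih =>
      by_cases hu : F t = Finset.univ
      · left
        exact Finset.univ_subset_iff.mp (hu ▸ hmono t)
      · rcases ih with h | h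
        · exact absurd h hu
        · right
          have hne : (F t : Set (Fin n)).Nonempty := ⟨j, by exact_mod_cast hjF t⟩
          have hnu : (F t : Set (Fin n)) ≠ Set.univ := by
            intro hc
            apply hu
            apply Finset.eq_univ_iff_forall.mpr
            intro x
            have : x ∈ (F t : Set (Fin n)) := hc ▸ Set.mem_univ x
            exact_mod_cast this
          obtain ⟨i', hi', j', hj', hij⟩ := hirr (F t) hne hnu
          have hi'' : i' ∈ F t := by exact_mod_cast hi'
          have hj'' : j' ∉ F t := fun hc => hj' (by exact_mod_cast hc)
          -- j' ∈ F (t+1)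
          have hj'mem : j' ∈ F (t + 1) := by
            simp only [hF, Finset.mem_filter, Finset.mem_univ, true_and] at hi'' ⊢
            obtain ⟨s, hs, hsne⟩ := hi''
            refine ⟨s + 1, by omega, ?_⟩
            have : A i' j' ≠ 0 := hij
            have h1 : (A ^ 1) i' j' ≠ 0 := by rwa [pow_one]
            exact pow_mul_ne A hA hsne h1
          have hss : F t ⊂ F (t + 1) := Finset.ssubset_iff_of_subset (hmono t) |>.mpr ⟨j', hj'mem, hj''⟩
          have := Finset.card_lt_card hss
          omega
  have hn : 0 < n := j.pos
  have hfin : ∀ w, w ∈ F (n - 1) → ∃ s < n, (A ^ s) j w ≠ 0 := by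
    intro w hw
    simp only [hF, Finset.mem_filter, Finset.mem_univ, true_and] at hw
    obtain ⟨s, hs, h⟩ := hw
    exact ⟨s, by omega, h⟩
  rcases main (n - 1) with h | h
  · exact hfin v (h ▸ Finset.mem_univ v)
  · have hcard : (F (n - 1)).card = Fintype.card (Fin n) := by
      have := Finset.card_le_univ (F (n - 1))
      simp only [Fintype.card_fin] at *
      omega
    exact hfin v (Finset.eq_univ_of_card _ hcard ▸ Finset.mem_univ v)

lemma block (S : Set (Fin n)) (h : ∀ i ∈ S, ∀ j ∉ S, A i j = 0) :
    ∀ k, ∀ i ∈ S, ∀ j ∉ S, (A ^ k) i j = 0 := by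
  intro k
  induction k with
  | zero =>
    intro i hi j hj
    have hij : i ≠ j := fun e => hj (e ▸ hi)
    simp [Matrix.one_apply, hij]
  | succ k ih =>
    intro i hi j hj
    rw [pow_succ, Matrix.mul_apply]
    apply Finset.sum_eq_zero
    intro l _
    by_cases hl : l ∈ S
    · rw [h l hl j hj, mul_zero]
    · rw [ih i hi l hl, zero_mul]

end Stmt5Aux

theorem stmt_5 {n : ℕ} (A : Matrix (Fin n) (Fin n) ℝ) (hA : ∀ i j, 0 ≤ A i j) :
    MatIrredR A ↔ ∃ a : ℕ → ℕ, StrictMono a ∧ (∀ m, 1 ≤ a m) ∧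
      ∀ m, MatIrredR (A ^ a m) := by
  constructor
  · intro hirr
    refine ⟨fun m => m * n.factorial + 1, ?_, fun m => Nat.le_add_left 1 _, ?_⟩
    · intro x y hxy
      have hf := Nat.factorial_pos n
      exact Nat.add_lt_add_right (Nat.mul_lt_mul_of_pos_right hxy hf) 1
    · intro m S hS hne
      obtain ⟨i, hi, j, hj, hij⟩ := hirr S hS hne
      obtain ⟨s, hs, hsi⟩ := Stmt5Aux.reach A hA hirr j i
      have h1 : (A ^ 1) i j ≠ 0 := by rwa [pow_one]
      have hc : (A ^ (1 + s)) i i ≠ 0 := Stmt5Aux.pow_mul_ne A hA h1 hsi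
      have hdvd : (1 + s) ∣ n.factorial := Nat.dvd_factorial (by omega) (by omega)
      obtain ⟨t, ht⟩ := hdvd
      have hexp : m * n.factorial = (1 + s) * (m * t) := by rw [ht]; ring
      have hdiag : (A ^ (m * n.factorial)) i i ≠ 0 := by
        rw [hexp]
        exact Stmt5Aux.pow_diag_ne A hA hc (m * t)
      exact ⟨i, hi, j, hj, Stmt5Aux.pow_mul_ne A hA hdiag h1⟩
  · rintro ⟨a, _, hpos, hirrs⟩ S hS hne
    by_contra hcon
    push_neg at hcon
    obtain ⟨i, hi, j, hj, hij⟩ := hirrs 0 S hS hne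
    exact hij (Stmt5Aux.block A S hcon (a 0) i hi j hj)
end

section
/- If A is an irreducible n×n nonnegative matrix with cyclic index p (the number of eigenvalues of modulus ρ(A)), then there exists a positive integer s such that A^{m·s·p+1} is irreducible for every nonnegative integer m. -/
open Matrix Complex

/-!
Every index of an irreducible nonnegative matrix `A` lies on a closed walk of positive length in
the graph of positive entries; if `d` is the product of these lengths, then `0 < (A ^ d) i i` for
every `i`. For `k = q * d + 1`, a walk `i → j` of length `L > 0` followed by `q * L` closed walks of
length `d` at `j` is a walk of length `k * L`, so `0 < ((A ^ k) ^ L) i j` and `A ^ k` is again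
irreducible. Hence `s = d` works.
-/

namespace Matrix

variable {ι R : Type*} [Fintype ι] [DecidableEq ι] [Ring R] [LinearOrder R]
  [IsStrictOrderedRing R] {A : Matrix ι ι R}

theorem pow_add_apply_pos (hA : ∀ i j, 0 ≤ A i j) {a b : ℕ} {i k j : ι}
    (h₁ : 0 < (A ^ a) i k) (h₂ : 0 < (A ^ b) k j) : 0 < (A ^ (a + b)) i j := by
  rw [pow_add, mul_apply]
  exact (mul_pos h₁ h₂).trans_le <| Finset.single_le_sum
    (fun c _ => mul_nonneg (pow_apply_nonneg hA a i c) (pow_apply_nonneg hA b c j))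
    (Finset.mem_univ k)

theorem pow_mul_apply_self_pos (hA : ∀ i j, 0 ≤ A i j) {d : ℕ} {i : ι}
    (h : 0 < (A ^ d) i i) (t : ℕ) : 0 < (A ^ (d * t)) i i := by
  induction t with
  | zero => simp
  | succ t ih => exact pow_add_apply_pos hA ih h

theorem IsIrreducible.exists_pow_apply_self_pos (hA : A.IsIrreducible) :
    ∃ d > 0, ∀ i, 0 < (A ^ d) i i := by
  choose c hc hcA using (isIrreducible_iff_exists_pow_pos hA.nonneg).1 hA
  refine ⟨∏ i, c i i, Finset.prod_pos fun i _ => hc i i, fun i => ?_⟩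
  obtain ⟨t, ht⟩ := Finset.dvd_prod_of_mem (fun i => c i i) (Finset.mem_univ i)
  rw [ht]
  exact pow_mul_apply_self_pos hA.nonneg (hcA i i) t

theorem IsIrreducible.pow_mul_add_one (hA : A.IsIrreducible) {d : ℕ}
    (hd : ∀ i, 0 < (A ^ d) i i) (q : ℕ) : (A ^ (q * d + 1)).IsIrreducible := by
  rw [isIrreducible_iff_exists_pow_pos (pow_apply_nonneg hA.nonneg _)]
  intro i j
  obtain ⟨L, hL, hij⟩ := (isIrreducible_iff_exists_pow_pos hA.nonneg).1 hA i j
  refine ⟨L, hL, ?_⟩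
  have hlen : L + d * (q * L) = (q * d + 1) * L := by ring
  rw [← pow_mul, ← hlen]
  exact pow_add_apply_pos hA.nonneg hij (pow_mul_apply_self_pos hA.nonneg (hd j) _)

end Matrix

theorem matIrredR_of_subsingleton {n : ℕ} [Subsingleton (Fin n)]
    (A : Matrix (Fin n) (Fin n) ℝ) : MatIrredR A :=
  fun _ hS hSu => absurd hS.eq_univ hSu

theorem matIrredR_of_isIrreducible {n : ℕ} {A : Matrix (Fin n) (Fin n) ℝ}
    (hA : A.IsIrreducible) : MatIrredR A := by
  let := toQuiver A
  rintro S ⟨i, hi⟩ hS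
  obtain ⟨j, hj⟩ := (Set.ne_univ_iff_exists_notMem S).1 hS
  obtain ⟨p, -⟩ := hA.connected i j
  induction p with
  | nil => exact absurd hi hj
  | @cons c _ _ e ih =>
    by_cases hc : c ∈ S
    · exact ⟨c, hc, _, hj, e.down.ne'⟩
    · exact ih hc

theorem isIrreducible_of_matIrredR {n : ℕ} [Nontrivial (Fin n)] {A : Matrix (Fin n) (Fin n) ℝ}
    (hA : ∀ i j, 0 ≤ A i j) (hirr : MatIrredR A) : A.IsIrreducible := by
  rw [isIrreducible_iff_exists_pow_pos hA]
  intro i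
  set reach : Set (Fin n) := {j | ∃ k > 0, 0 < (A ^ k) i j}
  have edge : ∀ a b, A a b ≠ 0 → 0 < (A ^ 1) a b := fun a b hab => by
    simpa using (hA a b).lt_of_ne' hab
  obtain ⟨_, rfl, b, -, hib⟩ := hirr {i} ⟨i, rfl⟩ (Set.singleton_ne_univ i)
  have hreach : reach = Set.univ := by
    by_contra hne
    obtain ⟨c, ⟨k, -, hic⟩, d, hd, hcd⟩ := hirr reach ⟨b, 1, one_pos, edge _ b hib⟩ hne
    exact hd ⟨k + 1, k.succ_pos, pow_add_apply_pos hA hic (edge c d hcd)⟩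
  exact Set.eq_univ_iff_forall.1 hreach

theorem stmt_6_general {n : ℕ} (A : Matrix (Fin n) (Fin n) ℝ) (hA : ∀ i j, 0 ≤ A i j)
    (hirr : MatIrredR A) (p : ℕ) :
    ∃ s : ℕ, 0 < s ∧ ∀ m : ℕ, MatIrredR (A ^ (m * s * p + 1)) := by
  rcases subsingleton_or_nontrivial (Fin n) with hn | hn
  · exact ⟨1, one_pos, fun _ => matIrredR_of_subsingleton _⟩
  have hA' := isIrreducible_of_matIrredR hA hirr
  obtain ⟨d, hd, hdiag⟩ := hA'.exists_pow_apply_self_pos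
  refine ⟨d, hd, fun m => matIrredR_of_isIrreducible ?_⟩
  rw [mul_right_comm]
  exact hA'.pow_mul_add_one hdiag (m * p)

theorem stmt_6 {n : ℕ} (A : Matrix (Fin n) (Fin n) ℝ) (hA : ∀ i j, 0 ≤ A i j)
    (hirr : MatIrredR A) (p : ℕ)
    (hp : p = Set.ncard {lam : ℂ | lam ∈ spectrum ℂ (A.map (Complex.ofReal)) ∧
      ‖lam‖ = specRad (A.map (Complex.ofReal))}) :
    ∃ s : ℕ, 0 < s ∧ ∀ m : ℕ, MatIrredR (A ^ (m * s * p + 1)) :=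
  stmt_6_general A hA hirr p
end

section
/- Let A be a complex power nonnegative matrix such that A^m is nonnegative and irreducible for some m ≥ ν(A), and let λ₁ be the eigenvalue of A with |λ₁| = ρ(A) possessing a positive eigenvector. Then for every y ∈ C^n, (1/k)·λ₁^{-k}·A^k·y → 0 as k → ∞. -/
/-!
Since `A ^ m` is entrywise nonnegative with the positive eigenvector `x` (for `λ₁ ^ m`), the
triangle inequality shows that `λ₁⁻ᵐ A ^ m` does not increase the weighted sup norm
`max_i |v i| / x i`. Hence the sequence `λ₁⁻ᵏ A ^ k y` is bounded (each residue class of `k`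
mod `m` is controlled by its first term), and dividing by `k` sends it to `0`.
-/

open ComplexOrder

open Matrix Complex Filter Topology

def MatIrred {n : ℕ} (A : Matrix (Fin n) (Fin n) ℂ) : Prop :=
  ∀ S : Set (Fin n), S.Nonempty → S ≠ Set.univ → ∃ i ∈ S, ∃ j ∉ S, A i j ≠ 0

theorem Nat.forall_of_forall_lt_of_add {m : ℕ} (hm : 0 < m) {P : ℕ → Prop}
    (hbase : ∀ r < m, P r) (hstep : ∀ k, P k → P (k + m)) (k : ℕ) : P k := by
  induction k using Nat.strong_induction_on with
  | _ k ih =>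
    rcases lt_or_ge k m with hk | hk
    · exact hbase k hk
    · obtain ⟨j, rfl⟩ := Nat.exists_eq_add_of_le' hk
      exact hstep j (ih j (by omega))

theorem Complex.norm_sum_of_nonneg {ι : Type*} (s : Finset ι) {z : ι → ℂ}
    (hz : ∀ i ∈ s, 0 ≤ z i) : ‖∑ i ∈ s, z i‖ = ∑ i ∈ s, ‖z i‖ := by
  apply Complex.ofReal_injective
  rw [Complex.norm_of_nonneg' (Finset.sum_nonneg hz), Complex.ofReal_sum]
  exact Finset.sum_congr rfl fun i hi => (Complex.norm_of_nonneg' (hz i hi)).symm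

namespace Matrix

variable {ι : Type*} [Fintype ι]

theorem pow_mulVec_of_mulVec_eq_smul {R : Type*} [CommSemiring R] [DecidableEq ι]
    {A : Matrix ι ι R} {v : ι → R} {μ : R} (h : A *ᵥ v = μ • v) (k : ℕ) :
    (A ^ k) *ᵥ v = μ ^ k • v := by
  induction k with
  | zero => simp
  | succ k ih => rw [pow_succ, ← mulVec_mulVec, h, mulVec_smul, ih, smul_smul, ← pow_succ']

theorem norm_mulVec_apply_le_of_nonneg {B : Matrix ι ι ℂ} (hB : ∀ i j, 0 ≤ B i j)
    {x : ι → ℝ} (hx : ∀ i, 0 ≤ x i) {μ : ℂ}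
    (hBx : B *ᵥ (fun i => (x i : ℂ)) = μ • fun i => (x i : ℂ))
    {v : ι → ℂ} {c : ℝ} (hv : ∀ j, ‖v j‖ ≤ c * x j) (i : ι) :
    ‖(B *ᵥ v) i‖ ≤ c * ‖μ‖ * x i := by
  have hrow : ∑ j, B i j * x j = μ * x i := congrFun hBx i
  calc ‖(B *ᵥ v) i‖ ≤ ∑ j, ‖B i j‖ * ‖v j‖ := by
        simpa only [mulVec, dotProduct, norm_mul] using
          norm_sum_le Finset.univ fun j => B i j * v j
    _ ≤ ∑ j, ‖B i j‖ * (c * x j) := by gcongr with j; exact hv j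
    _ = c * ‖∑ j, B i j * x j‖ := by
        rw [Complex.norm_sum_of_nonneg _ fun j _ => mul_nonneg (hB i j) (by exact_mod_cast hx j),
          Finset.mul_sum]
        simp only [norm_mul, Complex.norm_of_nonneg (hx _)]
        exact Finset.sum_congr rfl fun j _ => by ring
    _ = c * ‖μ‖ * x i := by rw [hrow, norm_mul, Complex.norm_of_nonneg (hx i), mul_assoc]


theorem norm_inv_smul_mulVec_apply_le_of_nonneg {B : Matrix ι ι ℂ} (hB : ∀ i j, 0 ≤ B i j)
    {x : ι → ℝ} (hx : ∀ i, 0 ≤ x i) {μ : ℂ}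
    (hBx : B *ᵥ (fun i => (x i : ℂ)) = μ • fun i => (x i : ℂ))
    {v : ι → ℂ} {c : ℝ} (hc : 0 ≤ c) (hv : ∀ j, ‖v j‖ ≤ c * x j) (i : ι) :
    ‖(μ⁻¹ • B *ᵥ v) i‖ ≤ c * x i := by
  rw [Pi.smul_apply, norm_smul, norm_inv]
  calc ‖μ‖⁻¹ * ‖(B *ᵥ v) i‖ ≤ ‖μ‖⁻¹ * (c * ‖μ‖ * x i) :=
        mul_le_mul_of_nonneg_left (norm_mulVec_apply_le_of_nonneg hB hx hBx hv i) (by positivity)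
    _ = (‖μ‖⁻¹ * ‖μ‖) * (c * x i) := by ring
    _ ≤ c * x i := mul_le_of_le_one_left (mul_nonneg hc (hx i)) inv_mul_le_one

theorem exists_forall_norm_inv_pow_smul_pow_mulVec_le [DecidableEq ι] {A : Matrix ι ι ℂ}
    {m : ℕ} (hm : 0 < m) (hnonneg : ∀ i j, 0 ≤ (A ^ m) i j) {x : ι → ℝ} (hx : ∀ i, 0 < x i)
    {lam : ℂ} (hev : A *ᵥ (fun i => (x i : ℂ)) = lam • fun i => (x i : ℂ)) (y : ι → ℂ) :
    ∃ C, ∀ k, ‖(lam ^ k)⁻¹ • (A ^ k) *ᵥ y‖ ≤ C := by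
  set z : ℕ → ι → ℂ := fun k => (lam ^ k)⁻¹ • (A ^ k) *ᵥ y
  have hrec : ∀ k, z (k + m) = (lam ^ m)⁻¹ • (A ^ m) *ᵥ z k := fun k => by
    simp only [z, add_comm k m, pow_add, mul_inv, mulVec_smul, ← mulVec_mulVec, smul_smul]
  set c : ℝ := ∑ r ∈ Finset.range m, ∑ i, ‖z r i‖ / x i
  have hratio : ∀ r i, 0 ≤ ‖z r i‖ / x i := fun r i => div_nonneg (norm_nonneg _) (hx i).le
  have hbase : ∀ r < m, ∀ i, ‖z r i‖ ≤ c * x i := fun r hr i => by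
    have hterm : ‖z r i‖ / x i ≤ c :=
      (Finset.single_le_sum (fun i _ => hratio r i) (Finset.mem_univ i)).trans
        (Finset.single_le_sum (f := fun r => ∑ i, ‖z r i‖ / x i)
          (fun r _ => Finset.sum_nonneg fun i _ => hratio r i) (Finset.mem_range.mpr hr))
    rwa [div_le_iff₀ (hx i)] at hterm
  have hc : 0 ≤ c := Finset.sum_nonneg fun r _ => Finset.sum_nonneg fun i _ => hratio r i
  have hdom : ∀ k i, ‖z k i‖ ≤ c * x i :=
    Nat.forall_of_forall_lt_of_add hm hbase fun k hk i => by
      rw [hrec]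
      exact norm_inv_smul_mulVec_apply_le_of_nonneg hnonneg (fun i => (hx i).le)
        (pow_mulVec_of_mulVec_eq_smul hev m) hc hk i
  refine ⟨c * ‖x‖, fun k =>
    (pi_norm_le_iff_of_nonneg (mul_nonneg hc (norm_nonneg x))).mpr fun i => ?_⟩
  exact (hdom k i).trans
    (mul_le_mul_of_nonneg_left ((Real.le_norm_self _).trans (norm_le_pi_norm x i)) hc)

end Matrix

theorem stmt_8_general {n : ℕ} (A : Matrix (Fin n) (Fin n) ℂ) (m : ℕ) (hm : 1 ≤ m)
    (hnonneg : ∀ i j, 0 ≤ (A ^ m) i j)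
    (lam : ℂ)
    (x : Fin n → ℝ) (hx : ∀ i, 0 < x i)
    (hev : A.mulVec (fun i => (x i : ℂ)) = lam • (fun i => (x i : ℂ))) :
    ∀ y : Fin n → ℂ,
      Tendsto (fun k : ℕ => ((k : ℂ))⁻¹ • (lam ^ k)⁻¹ • ((A ^ k).mulVec y))
        atTop (𝓝 0) := by
  intro y
  obtain ⟨C, hC⟩ := exists_forall_norm_inv_pow_smul_pow_mulVec_le hm hnonneg hx hev y
  exact tendsto_inv_atTop_nhds_zero_nat.zero_smul_isBoundedUnder_le
    (isBoundedUnder_of ⟨C, hC⟩)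

theorem stmt_8 {n : ℕ} (A : Matrix (Fin n) (Fin n) ℂ) (m : ℕ) (hm : 1 ≤ m)
    (hnonneg : ∀ i j, 0 ≤ (A ^ m) i j) (hirr : MatIrred (A ^ m))
    (lam : ℂ) (hlam : lam ∈ spectrum ℂ A) (hmod : ‖lam‖ = specRad A)
    (x : Fin n → ℝ) (hx : ∀ i, 0 < x i)
    (hev : A.mulVec (fun i => (x i : ℂ)) = lam • (fun i => (x i : ℂ))) :
    ∀ y : Fin n → ℂ,
      Tendsto (fun k : ℕ => ((k : ℂ))⁻¹ • (lam ^ k)⁻¹ • ((A ^ k).mulVec y))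
        atTop (𝓝 0) :=
  stmt_8_general A m hm hnonneg lam x hx hev
end

section
/- Let A be a complex power nonnegative matrix such that A^k is nonnegative and irreducible for some k ≥ ν(A), and set q = gcd(ν(A), k). Then A^q is eventually nonnegative, i.e. (A^q)^m ≥ 0 for all sufficiently large m. Explicitly, writing ν(A) = ν'q and k = k'q with gcd(ν',k') = 1, one has (A^q)^m ≥ 0 for all m > k'ν' − k' − ν'. -/
open ComplexOrder

open Matrix Complex

lemma mul_nonneg_mat {n : ℕ} {B C : Matrix (Fin n) (Fin n) ℂ}
    (hB : ∀ i j, 0 ≤ B i j) (hC : ∀ i j, 0 ≤ C i j) :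
    ∀ i j, 0 ≤ (B * C) i j := by
  intro i j
  rw [Matrix.mul_apply]
  exact Finset.sum_nonneg fun l _ => mul_nonneg (hB i l) (hC l j)

lemma pow_nonneg_mat {n : ℕ} {B : Matrix (Fin n) (Fin n) ℂ}
    (hB : ∀ i j, 0 ≤ B i j) : ∀ a : ℕ, ∀ i j, 0 ≤ (B ^ a) i j := by
  intro a
  induction a with
  | zero =>
    intro i j
    simp only [pow_zero, Matrix.one_apply]
    split <;> norm_num
  | succ a ih =>
    rw [pow_succ]
    exact mul_nonneg_mat ih hB

lemma repr_lemma {ν' k' : ℕ} (hν' : 1 ≤ ν') (hk' : 1 ≤ k') (hcop : Nat.gcd ν' k' = 1)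
    {m : ℕ} (hm : ((k' * ν' : ℤ) - k' - ν') < (m : ℤ)) :
    ∃ a b : ℕ, m = a * ν' + b * k' := by
  haveI : NeZero ν' := ⟨by omega⟩
  have hunit : IsUnit (k' : ZMod ν') := by
    rw [ZMod.isUnit_iff_coprime]
    exact Nat.Coprime.symm hcop
  set b : ℕ := (((m : ZMod ν') * (hunit.unit⁻¹ : Units (ZMod ν')))).val with hbdef
  have hblt : b < ν' := ZMod.val_lt _
  have hcast : ((b * k' : ℕ) : ZMod ν') = (m : ZMod ν') := by
    push_cast
    rw [hbdef, ZMod.natCast_val, ZMod.cast_id]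
    calc (m : ZMod ν') * (hunit.unit⁻¹ : Units (ZMod ν')) * (k' : ZMod ν')
        = (m : ZMod ν') * ((hunit.unit⁻¹ : Units (ZMod ν')) * (hunit.unit : Units (ZMod ν'))) := by
          rw [mul_assoc, IsUnit.unit_spec]
      _ = (m : ZMod ν') := by rw [Units.inv_mul, mul_one]
  have hdvd : (ν' : ℤ) ∣ ((m : ℤ) - b * k') := by
    have : ((((m : ℤ) - b * k') : ℤ) : ZMod ν') = 0 := by
      push_cast
      rw [← hcast]
      push_cast
      ring
    exact (ZMod.intCast_zmod_eq_zero_iff_dvd _ _).mp this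
  obtain ⟨c, hc⟩ := hdvd
  have hcpos : 0 ≤ c := by
    by_contra h
    push_neg at h
    have h1 : c ≤ -1 := by omega
    have h2 : (ν' : ℤ) * c ≤ (ν' : ℤ) * (-1) := by
      apply mul_le_mul_of_nonneg_left h1 (by positivity)
    have hb1 : (b : ℤ) ≤ (ν' : ℤ) - 1 := by exact_mod_cast Nat.le_sub_one_of_lt hblt
    have : (m : ℤ) - b * k' ≥ (m : ℤ) - ((ν' : ℤ) - 1) * k' := by
      have := mul_le_mul_of_nonneg_right hb1 (show (0:ℤ) ≤ k' by positivity)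
      linarith
    have hk'1 : (1:ℤ) ≤ k' := by exact_mod_cast hk'
    nlinarith
  refine ⟨c.toNat, b, ?_⟩
  have : (m : ℤ) = c.toNat * ν' + b * k' := by
    rw [Int.toNat_of_nonneg hcpos]
    linarith [hc]
  exact_mod_cast this

theorem stmt_16 {n : ℕ} (A : Matrix (Fin n) (Fin n) ℂ) (ν k q : ℕ)
    (hν1 : 1 ≤ ν) (hνnonneg : ∀ i j, 0 ≤ (A ^ ν) i j)
    (hνmin : ∀ m : ℕ, 1 ≤ m → m < ν → ¬ (∀ i j, 0 ≤ (A ^ m) i j))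
    (hk : ν ≤ k) (hknonneg : ∀ i j, 0 ≤ (A ^ k) i j) (hirr : MatIrred (A ^ k))
    (hq : q = Nat.gcd ν k) :
    (∃ M : ℕ, ∀ m : ℕ, M ≤ m → ∀ i j, 0 ≤ ((A ^ q) ^ m) i j) ∧
    (∀ ν' k' : ℕ, ν = ν' * q → k = k' * q → Nat.gcd ν' k' = 1 →
      ∀ m : ℕ, ((k' * ν' : ℤ) - k' - ν') < (m : ℤ) →
        ∀ i j, 0 ≤ ((A ^ q) ^ m) i j) := by
  have hqpos : 0 < q := by
    rw [hq]; exact Nat.gcd_pos_of_pos_left _ hν1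
  have main : ∀ ν' k' : ℕ, ν = ν' * q → k = k' * q → Nat.gcd ν' k' = 1 →
      ∀ m : ℕ, ((k' * ν' : ℤ) - k' - ν') < (m : ℤ) →
        ∀ i j, 0 ≤ ((A ^ q) ^ m) i j := by
    intro ν' k' hν' hk' hcop m hm
    have hν'pos : 1 ≤ ν' := Nat.pos_of_ne_zero (by rintro rfl; simp at hν'; omega)
    have hk'pos : 1 ≤ k' := Nat.pos_of_ne_zero (by rintro rfl; simp at hk'; omega)
    obtain ⟨a, b, hab⟩ := repr_lemma hν'pos hk'pos hcop hm
    have key : (A ^ q) ^ m = (A ^ ν) ^ a * (A ^ k) ^ b := by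
      rw [← pow_mul, ← pow_mul, ← pow_mul, ← pow_add]
      congr 1
      rw [hν', hk', hab]
      ring
    rw [key]
    exact mul_nonneg_mat (pow_nonneg_mat hνnonneg a) (pow_nonneg_mat hknonneg b)
  refine ⟨?_, main⟩
  set ν' := ν / q with hν'def
  set k' := k / q with hk'def
  have hd1 : ν = ν' * q := by
    rw [hν'def, Nat.div_mul_cancel]; rw [hq]; exact Nat.gcd_dvd_left _ _
  have hd2 : k = k' * q := by
    rw [hk'def, Nat.div_mul_cancel]; rw [hq]; exact Nat.gcd_dvd_right _ _
  have hcop : Nat.gcd ν' k' = 1 := by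
    rw [hν'def, hk'def, hq]
    exact Nat.coprime_div_gcd_div_gcd (Nat.gcd_pos_of_pos_left _ hν1)
  refine ⟨k' * ν', fun m hm => main ν' k' hd1 hd2 hcop m ?_⟩
  have hν'pos : 1 ≤ ν' := Nat.pos_of_ne_zero (by rintro h; rw [h] at hd1; simp at hd1; omega)
  have hk'pos : 1 ≤ k' := Nat.pos_of_ne_zero (by rintro h; rw [h] at hd2; simp at hd2; omega)
  have : (k' * ν' : ℤ) ≤ (m : ℤ) := by exact_mod_cast hm
  push_cast
  have h1 : (1:ℤ) ≤ ν' := by exact_mod_cast hν'pos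
  have h2 : (1:ℤ) ≤ k' := by exact_mod_cast hk'pos
  push_cast at this
  linarith
end
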